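/- (Pointwise form of the optimal discriminator.) For all real numbers a > 0 and b > 0 and for every t in the open interval (0, 1), a·log t + b·log(1 − t) ≤ a·log(a/(a + b)) + b·log(b/(a + b)), with equality if and only if t = a/(a + b). In particular, the function t ↦ a·log t + b·log(1 − t) on (0, 1) has the unique maximizer t = a/(a + b). -/

import Mathlib

open Real

/-! Both terms are bounded by tangent lines of the concave function `x ↦ a * log x`:
`a * log x ≤ a * log (a / c) + (c * x - a)` for every `c > 0`, with equality only at `x = a / c`.
Taking `c = a + b`, the bounds for `a * log t` and `b * log (1 - t)` add up to the claim, since the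
linear parts `(a + b) * t - a` and `(a + b) * (1 - t) - b` cancel. -/

theorem mul_log_lt_of_ne_div {a c x : ℝ} (ha : 0 < a) (hc : 0 < c) (hx : 0 < x)
    (hne : x ≠ a / c) : a * log x < a * log (a / c) + (c * x - a) := by
  have hy : 0 < c * x / a := by positivity
  have hy1 : c * x / a ≠ 1 := by
    intro h
    apply hne
    field_simp at h ⊢
    linarith
  have hlog : log (c * x / a) = log x - log (a / c) := by
    rw [log_div (by positivity) ha.ne', log_mul hc.ne' hx.ne', log_div ha.ne' hc.ne']
    ring
  have key := mul_lt_mul_of_pos_left (log_lt_sub_one_of_pos hy hy1) ha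
  rw [hlog, mul_sub_one, mul_div_cancel₀ _ ha.ne'] at key
  linarith

theorem mul_log_le_mul_log_div_add {a c x : ℝ} (ha : 0 < a) (hc : 0 < c) (hx : 0 < x) :
    a * log x ≤ a * log (a / c) + (c * x - a) := by
  rcases eq_or_ne x (a / c) with rfl | hne
  · rw [mul_div_cancel₀ _ hc.ne', sub_self, add_zero]
  · exact (mul_log_lt_of_ne_div ha hc hx hne).le

/-- (Pointwise form of the optimal discriminator.) For `a, b > 0` and
`t ∈ (0,1)`, `a·log t + b·log (1-t) ≤ a·log (a/(a+b)) + b·log (b/(a+b))`,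
with equality iff `t = a/(a+b)`. -/
theorem pointwise_optimal_discriminator
    (a b : ℝ) (ha : 0 < a) (hb : 0 < b) (t : ℝ) (ht0 : 0 < t) (ht1 : t < 1) :
    a * Real.log t + b * Real.log (1 - t) ≤
      a * Real.log (a / (a + b)) + b * Real.log (b / (a + b)) ∧
    (a * Real.log t + b * Real.log (1 - t) =
        a * Real.log (a / (a + b)) + b * Real.log (b / (a + b)) ↔
      t = a / (a + b)) := by
  have hab : 0 < a + b := by linarith
  have h1t : 0 < 1 - t := by linarith
  have hcompl : 1 - a / (a + b) = b / (a + b) := by field_simp; ring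
  have hstrict : t ≠ a / (a + b) → a * log t + b * log (1 - t) <
      a * log (a / (a + b)) + b * log (b / (a + b)) := fun hne => by
    have hA := mul_log_lt_of_ne_div ha hab ht0 hne
    have hB := mul_log_le_mul_log_div_add hb hab h1t
    linarith
  refine ⟨?_, fun heq => by_contra fun hne => (hstrict hne).ne heq, ?_⟩
  · rcases eq_or_ne t (a / (a + b)) with rfl | hne
    · rw [hcompl]
    · exact (hstrict hne).le
  · rintro rfl
    rw [hcompl]
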